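/- arXiv:1301.1665 — 4 statements merged into one kernel-verified Lean document; each statement's English description precedes it below -/
import Mathlib

section
/- For integers a', a'' and nonnegative integer t, the (q,π)-binomial coefficients satisfy the Vandermonde-type identity: [[a'+a''; t]] = ∑_{t'+t''=t} π^{t't'' + a't''} q^{a't'' - a''t'} [[a'; t']] [[a''; t'']]. -/
/- The ring `Aq = ℚ(q)[π]/(π²-1) ≅ ℚ(q) × ℚ(q)` (via π ↦ (1, -1), an isomorphism
since 2 is invertible).  Division/inversion is componentwise (the total fraction ring). -/
noncomputable section

abbrev Aq : Type := RatFunc ℚ × RatFunc ℚ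

/-- the element `q` -/
def qA : Aq := (RatFunc.X, RatFunc.X)

/-- the element `π`, satisfying `π² = 1` -/
def pA : Aq := (1, -1)

/-- The `(q,π)`-binomial coefficient
`[[a;t]] = (∏_{s=0}^{t-1} ((πq)^{a-s} - q^{s-a})) / (∏_{s=1}^{t} ((πq)^s - q^{-s}))`. -/
def qbinom (a : ℤ) (t : ℕ) : Aq :=
  (∏ s ∈ Finset.range t, ((pA * qA) ^ (a - (s : ℤ)) - qA ^ ((s : ℤ) - a))) /
  (∏ s ∈ Finset.range t, ((pA * qA) ^ ((s : ℤ) + 1) - qA ^ (-((s : ℤ) + 1))))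

/-! Over a field with `p ^ 2 = 1` and `q ≠ 0`, the brackets `[n] = (pq)^n - q^(-n)` satisfy
`[n + m] = (pq)^m [n] + q^(-n) [m]`, which gives the Pascal rule
`[[a+1; t+1]] = (pq)^(t+1) [[a; t+1]] + q^(t-a) [[a; t]]`. For fixed `b`, both `[[a+b; t]]` and
the Vandermonde sum satisfy this recurrence in `(a, t)` (for the sum, apply the Pascal rule to the
factor `[[a+1; i+1]]`; the exponents of `p` then agree modulo `2`), and they agree at `a = 0` and
at `t = 0`. As `(pq)^(t+1)` is invertible the recurrence can also be run downwards in `a`, so the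
two functions agree on all of `ℤ × ℕ`.

The ring `Aq` is the product of two copies of `ℚ(q)`, with `π = (1, -1)`, and in each factor the
denominators `[s+1]` are nonzero because `q` is not a root of unity. -/

open Finset

theorem eq_of_pascal_recurrence {R : Type*} [Ring R] [NoZeroDivisors R] {F G : ℤ → ℕ → R}
    (α : ℕ → R) (β : ℤ → ℕ → R) (hα : ∀ t, α t ≠ 0)
    (hF : ∀ a t, F (a + 1) (t + 1) = α t * F a (t + 1) + β a t * F a t)
    (hG : ∀ a t, G (a + 1) (t + 1) = α t * G a (t + 1) + β a t * G a t)
    (h_left : ∀ t, F 0 t = G 0 t) (h_right : ∀ a, F a 0 = G a 0) : F = G := by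
  funext a t
  induction t generalizing a with
  | zero => exact h_right a
  | succ t ih =>
    induction a using Int.induction_on with
    | zero => exact h_left _
    | succ a iha => rw [hF, hG, iha, ih]
    | pred a iha =>
      have hF' := hF (-a - 1) t
      have hG' := hG (-a - 1) t
      rw [sub_add_cancel] at hF' hG'
      rw [iha, hG', ih] at hF'
      exact (mul_left_cancel₀ (hα t) (add_right_cancel hF')).symm

namespace QPBinom

variable {K : Type*} [Field K]

def bracket (p q : K) (n : ℤ) : K := (p * q) ^ n - q ^ (-n)

def binom (p q : K) (a : ℤ) (t : ℕ) : K :=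
  (∏ s ∈ range t, bracket p q (a - s)) / ∏ s ∈ range t, bracket p q (s + 1)

def weight (p q : K) (a b : ℤ) (i j : ℕ) : K :=
  p ^ ((i : ℤ) * j + a * j) * q ^ (a * j - b * i)

def vandermondeSum (p q : K) (a b : ℤ) (t : ℕ) : K :=
  ∑ x ∈ antidiagonal t, weight p q a b x.1 x.2 * binom p q a x.1 * binom p q b x.2

variable {p q : K}

theorem zpow_add_two_mul_of_sq_eq_one (hp : p ^ 2 = 1) (e k : ℤ) : p ^ (e + 2 * k) = p ^ e := by
  have hp0 : p ≠ 0 := left_ne_zero_of_mul_eq_one (pow_two p ▸ hp)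
  rw [zpow_add₀ hp0, zpow_mul, zpow_two, ← pow_two, hp, one_zpow, mul_one]

theorem bracket_add (hp : p ≠ 0) (hq : q ≠ 0) (m n : ℤ) :
    bracket p q (m + n) = (p * q) ^ n * bracket p q m + q ^ (-m) * bracket p q n := by
  simp only [bracket]
  rw [zpow_add₀ (mul_ne_zero hp hq), neg_add, zpow_add₀ hq]
  ring

@[simp]
theorem binom_zero_right (a : ℤ) : binom p q a 0 = 1 := by simp [binom]

theorem binom_zero_succ (t : ℕ) : binom p q 0 (t + 1) = 0 := by
  simp [binom, prod_range_succ', bracket]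

theorem binom_succ_succ (hp : p ≠ 0) (hq : q ≠ 0)
    (hden : ∀ s : ℕ, bracket p q (s + 1) ≠ 0) (a : ℤ) (t : ℕ) :
    binom p q (a + 1) (t + 1) =
      (p * q) ^ ((t : ℤ) + 1) * binom p q a (t + 1) + q ^ ((t : ℤ) - a) * binom p q a t := by
  have hnum : ∏ s ∈ range (t + 1), bracket p q (a + 1 - s) =
      (∏ s ∈ range t, bracket p q (a - s)) * bracket p q (a + 1) := by
    rw [prod_range_succ']
    push_cast
    simp only [add_sub_add_right_eq_sub, sub_zero]
  have hsplit : bracket p q (a + 1) =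
      (p * q) ^ ((t : ℤ) + 1) * bracket p q (a - t) +
        q ^ ((t : ℤ) - a) * bracket p q (t + 1) := by
    rw [show a + 1 = (a - t) + (t + 1) by ring, bracket_add hp hq, neg_sub]
  simp only [binom, hnum, hsplit, prod_range_succ]
  field_simp [hden t]

theorem weight_add_one_mul_zpow (hp : p ≠ 0) (hq : q ≠ 0) (a b : ℤ) (i j : ℕ) :
    weight p q (a + 1) b i j * (p * q) ^ (i : ℤ) =
      (p * q) ^ ((i + j : ℕ) : ℤ) * weight p q a b i j := by
  simp only [weight, mul_zpow]
  rw [show (i : ℤ) * j + (a + 1) * j = (i * j + a * j) + j by ring,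
    show (a + 1) * j - b * i = (a * j - b * i) + j by ring]
  push_cast
  simp only [zpow_add₀ hp, zpow_add₀ hq]
  ring

theorem weight_add_one_succ_mul_zpow (hp : p ^ 2 = 1) (hq : q ≠ 0) (a b : ℤ) (i j : ℕ) :
    weight p q (a + 1) b (i + 1) j * q ^ ((i : ℤ) - a) =
      q ^ (((i + j : ℕ) : ℤ) - (a + b)) * weight p q a b i j := by
  simp only [weight]
  push_cast
  rw [mul_assoc, ← zpow_add₀ hq,
    show ((i : ℤ) + 1) * j + (a + 1) * j = (i * j + a * j) + 2 * j by ring,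
    zpow_add_two_mul_of_sq_eq_one hp,
    show (a + 1) * j - b * (i + 1) + (i - a) = (i + j - (a + b)) + (a * j - b * i) by ring,
    zpow_add₀ hq]
  ring

theorem vandermondeSum_zero_left (b : ℤ) (t : ℕ) :
    vandermondeSum p q 0 b t = binom p q b t := by
  cases t with
  | zero => simp [vandermondeSum, weight]
  | succ t => simp [vandermondeSum, Nat.sum_antidiagonal_succ, binom_zero_succ, weight]

theorem vandermondeSum_zero_right (a b : ℤ) : vandermondeSum p q a b 0 = 1 := by
  simp [vandermondeSum, weight]

theorem vandermondeSum_succ_succ (hp : p ^ 2 = 1) (hq : q ≠ 0)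
    (hden : ∀ s : ℕ, bracket p q (s + 1) ≠ 0) (a b : ℤ) (t : ℕ) :
    vandermondeSum p q (a + 1) b (t + 1) =
      (p * q) ^ ((t : ℤ) + 1) * vandermondeSum p q a b (t + 1) +
        q ^ ((t : ℤ) - (a + b)) * vandermondeSum p q a b t := by
  have hp0 : p ≠ 0 := left_ne_zero_of_mul_eq_one (pow_two p ▸ hp)
  have hfirst : weight p q (a + 1) b 0 (t + 1) * binom p q (a + 1) 0 * binom p q b (t + 1) =
      (p * q) ^ ((t : ℤ) + 1) *
        (weight p q a b 0 (t + 1) * binom p q a 0 * binom p q b (t + 1)) := by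
    have hA := weight_add_one_mul_zpow hp0 hq a b 0 (t + 1)
    push_cast at hA
    simp only [binom_zero_right, mul_one, zpow_zero] at hA ⊢
    rw [hA, zero_add, mul_assoc]
  have hsucc : ∀ x ∈ antidiagonal t,
      weight p q (a + 1) b (x.1 + 1) x.2 * binom p q (a + 1) (x.1 + 1) * binom p q b x.2 =
        (p * q) ^ ((t : ℤ) + 1) *
            (weight p q a b (x.1 + 1) x.2 * binom p q a (x.1 + 1) * binom p q b x.2) +
          q ^ ((t : ℤ) - (a + b)) *
            (weight p q a b x.1 x.2 * binom p q a x.1 * binom p q b x.2) := by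
    rintro ⟨i, j⟩ hij
    rw [HasAntidiagonal.mem_antidiagonal] at hij
    have hA := weight_add_one_mul_zpow hp0 hq a b (i + 1) j
    have hB := weight_add_one_succ_mul_zpow hp hq a b i j
    rw [show i + 1 + j = t + 1 by omega] at hA
    rw [hij] at hB
    push_cast at hA
    rw [binom_succ_succ hp0 hq hden]
    linear_combination (binom p q a (i + 1) * binom p q b j) * hA +
      (binom p q a i * binom p q b j) * hB
  simp only [vandermondeSum]
  rw [Nat.sum_antidiagonal_succ, Nat.sum_antidiagonal_succ, hfirst, sum_congr rfl hsucc,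
    sum_add_distrib, ← mul_sum, ← mul_sum]
  ring

theorem binom_add_eq_vandermondeSum (hp : p ^ 2 = 1) (hq : q ≠ 0)
    (hden : ∀ s : ℕ, bracket p q (s + 1) ≠ 0) (a b : ℤ) (t : ℕ) :
    binom p q (a + b) t = vandermondeSum p q a b t := by
  have hp0 : p ≠ 0 := left_ne_zero_of_mul_eq_one (pow_two p ▸ hp)
  have key := eq_of_pascal_recurrence (F := fun a t => binom p q (a + b) t)
    (G := fun a t => vandermondeSum p q a b t) (fun t => (p * q) ^ ((t : ℤ) + 1))
    (fun a t => q ^ ((t : ℤ) - (a + b))) (fun t => zpow_ne_zero _ (mul_ne_zero hp0 hq))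
    (fun a t => by simpa only [add_right_comm a 1 b] using binom_succ_succ hp0 hq hden (a + b) t)
    (fun a t => vandermondeSum_succ_succ hp hq hden a b t)
    (fun t => by simp [vandermondeSum_zero_left])
    (fun a => by simp [vandermondeSum_zero_right])
  exact congrFun (congrFun key a) t

theorem bracket_ne_zero (hp : p ^ 2 = 1) (hq : q ≠ 0) (hq_ord : ¬IsOfFinOrder q) {n : ℕ}
    (hn : n ≠ 0) : bracket p q n ≠ 0 := by
  intro h
  rw [bracket, sub_eq_zero, zpow_neg, zpow_natCast, zpow_natCast, mul_pow,
    ← mul_eq_one_iff_eq_inv₀ (pow_ne_zero n hq)] at h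
  have h4 : q ^ (4 * n) = 1 := by
    calc q ^ (4 * n) = (p ^ 2) ^ n * q ^ (4 * n) := by rw [hp, one_pow, one_mul]
      _ = (p ^ n * q ^ n * q ^ n) ^ 2 := by ring
      _ = 1 := by rw [h, one_pow]
  exact hq_ord (isOfFinOrder_iff_pow_eq_one.mpr ⟨4 * n, by omega, h4⟩)

end QPBinom

theorem RatFunc.not_isOfFinOrder_X {F : Type*} [Field F] :
    ¬IsOfFinOrder (RatFunc.X : RatFunc F) := by
  rw [isOfFinOrder_iff_pow_eq_one]
  rintro ⟨n, hn, h⟩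
  have := congrArg RatFunc.intDegree h
  rw [← RatFunc.algebraMap_X, ← map_pow, RatFunc.intDegree_polynomial, RatFunc.intDegree_one,
    Polynomial.natDegree_X_pow] at this
  omega

open QPBinom

theorem qbinom_fst (a : ℤ) (t : ℕ) : (qbinom a t).1 = binom 1 RatFunc.X a t := by
  simp [qbinom, binom, bracket, Prod.fst_prod, pA, qA, neg_sub]

theorem qbinom_snd (a : ℤ) (t : ℕ) : (qbinom a t).2 = binom (-1) RatFunc.X a t := by
  simp [qbinom, binom, bracket, Prod.snd_prod, pA, qA, neg_sub]

/-- Vandermonde-type identity: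
`[[a'+a'';t]] = ∑_{t'+t''=t} π^{t't''+a't''} q^{a't''-a''t'} [[a';t']][[a'';t'']]`. -/
theorem qbinom_vandermonde (a' a'' : ℤ) (t : ℕ) :
    qbinom (a' + a'') t =
      ∑ x ∈ Finset.HasAntidiagonal.antidiagonal t,
        pA ^ ((x.1 : ℤ) * (x.2 : ℤ) + a' * (x.2 : ℤ)) *
          qA ^ (a' * (x.2 : ℤ) - a'' * (x.1 : ℤ)) *
            qbinom a' x.1 * qbinom a'' x.2 := by
  have hden {p : RatFunc ℚ} (hp : p ^ 2 = 1) (s : ℕ) : bracket p RatFunc.X (s + 1) ≠ 0 := by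
    exact_mod_cast bracket_ne_zero hp RatFunc.X_ne_zero RatFunc.not_isOfFinOrder_X s.succ_ne_zero
  ext
  · simpa [Prod.fst_sum, qbinom_fst, vandermondeSum, weight, pA, qA]
      using binom_add_eq_vandermondeSum (one_pow 2) RatFunc.X_ne_zero (hden (one_pow 2)) a' a'' t
  · simpa [Prod.snd_sum, qbinom_snd, vandermondeSum, weight, pA, qA]
      using binom_add_eq_vandermondeSum neg_one_sq RatFunc.X_ne_zero (hden neg_one_sq) a' a'' t
end
end

section
/- The (q,π)-binomial coefficient [[a;t]] lies in the subring ℤ[q, q^{-1}, π]/(π²-1) for all integers a and nonnegative integers t. -/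
/- The ring `Aq = ℚ(q)[π]/(π²-1) ≅ ℚ(q) × ℚ(q)` (via π ↦ (1, -1), an isomorphism
since 2 is invertible).  Division/inversion is componentwise (the total fraction ring). -/
noncomputable section

namespace QbinomAux

lemma X_pow_ne_C (m : ℕ) (hm : m ≠ 0) (c : ℚ) : (RatFunc.X : RatFunc ℚ) ^ m ≠ RatFunc.C c := by
  intro h
  rw [← RatFunc.algebraMap_X, ← map_pow, ← RatFunc.algebraMap_C] at h
  have := RatFunc.algebraMap_injective ℚ h
  have h2 := congrArg Polynomial.natDegree this
  simp [Polynomial.natDegree_X_pow] at h2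
  exact hm h2

lemma Xsq_zpow_ne_C (k : ℤ) (hk : k ≠ 0) (c : ℚ) :
    ((RatFunc.X : RatFunc ℚ) ^ 2) ^ k ≠ RatFunc.C c := by
  have hX : (RatFunc.X : RatFunc ℚ) ≠ 0 := RatFunc.X_ne_zero
  have hX2 : (RatFunc.X : RatFunc ℚ) ^ 2 ≠ 0 := pow_ne_zero _ hX
  intro h
  rcases lt_or_gt_of_ne hk with hneg | hpos
  · have h2 : ((RatFunc.X : RatFunc ℚ) ^ 2) ^ (-k) = RatFunc.C c⁻¹ := by
      rw [zpow_neg, h, map_inv₀]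
    set m := (-k).toNat with hm
    have hmk : ((m : ℤ)) = -k := Int.toNat_of_nonneg (by omega)
    have : ((RatFunc.X : RatFunc ℚ)) ^ (2 * m) = RatFunc.C c⁻¹ := by
      rw [pow_mul, ← zpow_natCast ((RatFunc.X : RatFunc ℚ)^2) m, hmk]; exact h2
    exact X_pow_ne_C (2 * m) (by omega) _ this
  · set m := k.toNat with hm
    have hmk : ((m : ℤ)) = k := Int.toNat_of_nonneg (by omega)
    have : ((RatFunc.X : RatFunc ℚ)) ^ (2 * m) = RatFunc.C c := by
      rw [pow_mul, ← zpow_natCast ((RatFunc.X : RatFunc ℚ)^2) m, hmk]; exact h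
    exact X_pow_ne_C (2 * m) (by omega) _ this

lemma key_ne (e : ℚ) (he : e ≠ 0) (n : ℤ) (hn : n ≠ 0) :
    (RatFunc.C e * RatFunc.X) ^ n - RatFunc.X ^ (-n) ≠ 0 := by
  have hX : (RatFunc.X : RatFunc ℚ) ≠ 0 := RatFunc.X_ne_zero
  have hCe : (RatFunc.C e : RatFunc ℚ) ≠ 0 := (map_ne_zero RatFunc.C).mpr he
  intro h
  have h1 : (RatFunc.C e * RatFunc.X) ^ n * RatFunc.X ^ n = 1 := by
    rw [sub_eq_zero.mp h, ← zpow_add₀ hX]; simp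
  have h2 : (RatFunc.C e) ^ n * ((RatFunc.X : RatFunc ℚ) ^ 2) ^ n = 1 := by
    rw [← mul_zpow, ← h1, ← mul_zpow]; ring_nf
  have h3 : ((RatFunc.X : RatFunc ℚ) ^ 2) ^ n = ((RatFunc.C e) ^ n)⁻¹ :=
    (inv_eq_of_mul_eq_one_right h2).symm
  rw [← map_zpow₀, ← map_inv₀] at h3
  exact Xsq_zpow_ne_C n hn _ h3

lemma fst_zpow (x : Aq) (n : ℤ) : (x ^ n).1 = x.1 ^ n := by
  rcases n with (k|k) <;> simp [zpow_negSucc]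

lemma snd_zpow (x : Aq) (n : ℤ) : (x ^ n).2 = x.2 ^ n := by
  rcases n with (k|k) <;> simp [zpow_negSucc]

/-- the bracket `[n] = (πq)^n - q^{-n}` -/
def br (n : ℤ) : Aq := (pA * qA) ^ n - qA ^ (-n)

lemma pq_fst : (pA * qA).1 = RatFunc.X := by simp [pA, qA]
lemma pq_snd : (pA * qA).2 = -RatFunc.X := by simp [pA, qA]

lemma br_fst (n : ℤ) : (br n).1 = RatFunc.X ^ n - RatFunc.X ^ (-n) := by
  simp [br, fst_zpow, pA, qA]

lemma br_snd (n : ℤ) : (br n).2 = (-RatFunc.X) ^ n - RatFunc.X ^ (-n) := by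
  simp [br, snd_zpow, pA, qA]

lemma br_fst_ne (n : ℤ) (hn : n ≠ 0) : (br n).1 ≠ 0 := by
  rw [br_fst]
  have := key_ne 1 one_ne_zero n hn
  simpa using this

lemma br_snd_ne (n : ℤ) (hn : n ≠ 0) : (br n).2 ≠ 0 := by
  rw [br_snd]
  have := key_ne (-1) (by norm_num) n hn
  have hC : (RatFunc.C (-1 : ℚ)) = (-1 : RatFunc ℚ) := by simp
  rw [hC] at this
  simpa using this

lemma br_zero : br 0 = 0 := by simp [br]

lemma mul_inv_cancel' (x : Aq) (h1 : x.1 ≠ 0) (h2 : x.2 ≠ 0) : x * x⁻¹ = 1 :=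
  Prod.ext (mul_inv_cancel₀ h1) (mul_inv_cancel₀ h2)

/-- the denominator -/
def Dd (t : ℕ) : Aq := ∏ s ∈ Finset.range t, br ((s : ℤ) + 1)

lemma Dd_fst_ne (t : ℕ) : (Dd t).1 ≠ 0 := by
  have : (Dd t).1 = ∏ s ∈ Finset.range t, (br ((s : ℤ) + 1)).1 :=
    map_prod (RingHom.fst (RatFunc ℚ) (RatFunc ℚ)) _ _
  rw [this]
  exact Finset.prod_ne_zero_iff.mpr fun s _ => br_fst_ne _ (by omega)

lemma Dd_snd_ne (t : ℕ) : (Dd t).2 ≠ 0 := by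
  have : (Dd t).2 = ∏ s ∈ Finset.range t, (br ((s : ℤ) + 1)).2 :=
    map_prod (RingHom.snd (RatFunc ℚ) (RatFunc ℚ)) _ _
  rw [this]
  exact Finset.prod_ne_zero_iff.mpr fun s _ => br_snd_ne _ (by omega)

lemma qbinom_eq (a : ℤ) (t : ℕ) :
    qbinom a t = (∏ s ∈ Finset.range t, br (a - s)) * (Dd t)⁻¹ := by
  rw [qbinom, div_eq_mul_inv, Dd]
  congr 1
  exact Finset.prod_congr rfl fun s _ => by rw [br, neg_sub]

lemma comp_pascal (u : RatFunc ℚ) (hu : u ≠ 0) (a t : ℤ) :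
    u ^ (a + 1) - RatFunc.X ^ (-(a + 1)) =
      u ^ (a - t) * (u ^ (t + 1) - RatFunc.X ^ (-(t + 1))) +
      RatFunc.X ^ (-(t + 1)) * (u ^ (a - t) - RatFunc.X ^ (-(a - t))) := by
  have hX : (RatFunc.X : RatFunc ℚ) ≠ 0 := RatFunc.X_ne_zero
  have h1 : u ^ (a + 1) = u ^ (a - t) * u ^ (t + 1) := by
    rw [← zpow_add₀ hu]; congr 1; ring
  have h2 : (RatFunc.X : RatFunc ℚ) ^ (-(a + 1)) =
      RatFunc.X ^ (-(t + 1)) * RatFunc.X ^ (-(a - t)) := by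
    rw [← zpow_add₀ hX]; congr 1; ring
  rw [h1, h2]; ring

lemma br_pascal (a t : ℤ) :
    br (a + 1) = (pA * qA) ^ (a - t) * br (t + 1) + qA ^ (-(t + 1)) * br (a - t) := by
  have hX : (RatFunc.X : RatFunc ℚ) ≠ 0 := RatFunc.X_ne_zero
  apply Prod.ext
  · simp only [Prod.fst_add, Prod.fst_mul, br_fst, fst_zpow, pA, qA, one_mul]
    exact comp_pascal _ hX a t
  · simp only [Prod.snd_add, Prod.snd_mul, br_snd, snd_zpow, pA, qA, neg_one_mul]
    exact comp_pascal _ (by simpa using hX) a t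

lemma pascal (a : ℤ) (t : ℕ) :
    qbinom (a + 1) (t + 1) =
      (pA * qA) ^ (a - t) * qbinom a t + qA ^ (-((t : ℤ) + 1)) * qbinom a (t + 1) := by
  have hE : br ((t : ℤ) + 1) * (br ((t : ℤ) + 1))⁻¹ = 1 :=
    mul_inv_cancel' _ (br_fst_ne _ (by omega)) (br_snd_ne _ (by omega))
  have hN1 : (∏ s ∈ Finset.range (t + 1), br (a + 1 - s)) =
      (∏ s ∈ Finset.range t, br (a - s)) * br (a + 1) := by
    rw [Finset.prod_range_succ']
    congr 1
    · exact Finset.prod_congr rfl fun s _ => by congr 1; push_cast; ring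
    · congr 1; push_cast; ring
  have hN2 : (∏ s ∈ Finset.range (t + 1), br (a - s)) =
      (∏ s ∈ Finset.range t, br (a - s)) * br (a - t) := Finset.prod_range_succ _ _
  have hD : Dd (t + 1) = Dd t * br ((t : ℤ) + 1) := Finset.prod_range_succ _ _
  rw [qbinom_eq, qbinom_eq, qbinom_eq, hN1, hN2, hD, mul_inv]
  have hbr := br_pascal a ((t : ℤ))
  linear_combination ((∏ s ∈ Finset.range t, br (a - s)) * (Dd t)⁻¹ * (br ((t:ℤ)+1))⁻¹) * hbr +
    ((pA * qA) ^ (a - (t:ℤ)) * (∏ s ∈ Finset.range t, br (a - s)) * (Dd t)⁻¹) * hE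

end QbinomAux
lemma qA_mul_inv : qA * qA⁻¹ = 1 :=
  QbinomAux.mul_inv_cancel' qA RatFunc.X_ne_zero RatFunc.X_ne_zero

namespace QbinomAux

lemma qA_zpow_cancel (n : ℤ) : qA ^ n * qA ^ (-n) = 1 := by
  have hX : (RatFunc.X : RatFunc ℚ) ≠ 0 := RatFunc.X_ne_zero
  apply Prod.ext <;>
    simp only [Prod.fst_mul, Prod.snd_mul, fst_zpow, snd_zpow, qA, ← zpow_add₀ hX,
      add_neg_cancel, zpow_zero, Prod.fst_one, Prod.snd_one]

lemma pascal_down (a : ℤ) (t : ℕ) :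
    qbinom a (t + 1) =
      qA ^ ((t : ℤ) + 1) * (qbinom (a + 1) (t + 1) - (pA * qA) ^ (a - t) * qbinom a t) := by
  have hp := pascal a t
  have hq1 := qA_zpow_cancel ((t : ℤ) + 1)
  linear_combination (-(qA ^ ((t:ℤ)+1))) * hp - (qbinom a (t+1)) * hq1

lemma qbinom_zero_of (a : ℤ) (t : ℕ) (h0 : 0 ≤ a) (h : a < t) : qbinom a t = 0 := by
  rw [qbinom_eq]
  have : (∏ s ∈ Finset.range t, br (a - s)) = 0 :=
    Finset.prod_eq_zero (i := a.toNat) (Finset.mem_range.mpr (by omega))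
      (by rw [show a - (a.toNat : ℤ) = 0 by omega]; exact br_zero)
  rw [this, zero_mul]

-- membership lemmas
abbrev S : Subalgebra ℤ Aq := Algebra.adjoin ℤ ({qA, qA⁻¹, pA} : Set Aq)

lemma qA_mem : qA ∈ S := Algebra.subset_adjoin (by simp)
lemma qAi_mem : qA⁻¹ ∈ S := Algebra.subset_adjoin (by simp)
lemma pA_mem : pA ∈ S := Algebra.subset_adjoin (by simp)

lemma pA_inv : pA⁻¹ = pA := by
  apply Prod.ext <;> simp [pA, inv_neg]

lemma zpow_mem {x : Aq} (hx : x ∈ S) (hxi : x⁻¹ ∈ S) (n : ℤ) : x ^ n ∈ S := by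
  rcases n with (k | k)
  · exact pow_mem hx k
  · rw [zpow_negSucc, ← inv_pow]
    exact pow_mem hxi (k + 1)

lemma qA_zpow_mem (n : ℤ) : qA ^ n ∈ S := zpow_mem qA_mem qAi_mem n

lemma pq_zpow_mem (n : ℤ) : (pA * qA) ^ n ∈ S := by
  refine zpow_mem (mul_mem pA_mem qA_mem) ?_ n
  rw [mul_inv, pA_inv]
  exact mul_mem pA_mem qAi_mem

lemma main : ∀ (t : ℕ) (a : ℤ), qbinom a t ∈ S := by
  intro t
  induction t with
  | zero =>
    intro a
    rw [qbinom_eq]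
    simp only [Finset.range_zero, Finset.prod_empty, Dd, inv_one, one_mul]
    exact one_mem _
  | succ t IH =>
    have up : ∀ n : ℕ, qbinom ((t : ℤ) + n) (t + 1) ∈ S := by
      intro n
      induction n with
      | zero =>
        simp only [Nat.cast_zero, add_zero]
        rw [qbinom_zero_of _ _ (by omega) (by omega)]
        exact zero_mem _
      | succ n ihn =>
        have : ((t : ℤ) + (n + 1 : ℕ)) = ((t : ℤ) + n) + 1 := by push_cast; ring
        rw [this, pascal]
        exact add_mem (mul_mem (pq_zpow_mem _) (IH _)) (mul_mem (qA_zpow_mem _) (by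
          convert ihn using 2))
    have down : ∀ n : ℕ, qbinom (-(n : ℤ)) (t + 1) ∈ S := by
      intro n
      induction n with
      | zero =>
        simp only [Nat.cast_zero, neg_zero]
        rw [qbinom_zero_of 0 (t + 1) le_rfl (by omega)]
        exact zero_mem _
      | succ n ihn =>
        rw [pascal_down]
        have h1 : (-(n + 1 : ℕ) : ℤ) + 1 = -(n : ℤ) := by push_cast; ring
        rw [h1]
        exact mul_mem (qA_zpow_mem _) (sub_mem ihn (mul_mem (pq_zpow_mem _) (IH _)))
    intro a
    rcases le_or_gt 0 a with h0 | h0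
    · rcases le_or_gt (t : ℤ) a with h1 | h1
      · have := up (a - (t : ℤ)).toNat
        have h2 : ((t : ℤ) + ((a - (t : ℤ)).toNat : ℤ)) = a := by omega
        rwa [h2] at this
      · exact (qbinom_zero_of a (t + 1) h0 (by omega)) ▸ zero_mem _
    · have := down (-a).toNat
      have h2 : (-(((-a).toNat : ℤ))) = a := by omega
      rwa [h2] at this

end QbinomAux

/-- Integrality: `[[a;t]]` lies in the `ℤ`-subalgebra `ℤ[q,q⁻¹,π]` of `Aq`. -/
theorem qbinom_integral (a : ℤ) (t : ℕ) :
    qbinom a t ∈ Algebra.adjoin ℤ ({qA, qA⁻¹, pA} : Set Aq) :=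
  QbinomAux.main t a
end
end

section
/- Let σ be the anti-involution of the free superalgebra 'f fixing each generator θ_i, and let ᵗr be the composition of r with the (unsigned) flip x⊗y ↦ y⊗x. Then for all x ∈ 'f, r(σ(x)) = (σ⊗σ)(ᵗr(x)). Consequently, the bilinear form on 'f satisfies (σ(x), σ(x')) = (x, x') for all x, x'. -/
/- The ring `Aq = ℚ(q)[π]/(π²-1) ≅ ℚ(q) × ℚ(q)` (via π ↦ (1, -1), an isomorphism
since 2 is invertible).  Division/inversion is componentwise (the total fraction ring). -/
noncomputable section

/-- A super Cartan datum: `I = I₀ ⊔ I₁` (parity `p : I → {0,1}`), symmetric form `Bf`,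
with `Bf i i = 2 d i > 0`, `⟨i,j'⟩ = aij i j = 2(i·j)/(i·i) ∈ -ℕ` for `i ≠ j`,
even for odd `i`, and `I₁ ≠ ∅`. -/
structure SCD (I : Type) (Bf : I → I → ℤ) (p d : I → ℕ) (aij : I → I → ℤ) : Prop where
  symm : ∀ i j, Bf i j = Bf j i
  diag : ∀ i, Bf i i = 2 * (d i : ℤ)
  dpos : ∀ i, 0 < d i
  div : ∀ i j, (d i : ℤ) * aij i j = Bf i j
  offdiag : ∀ i j, i ≠ j → aij i j ≤ 0
  par_le : ∀ i, p i ≤ 1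
  odd_even : ∀ i j, p i = 1 → Even (aij i j)
  odd_nonempty : ∃ i, p i = 1

/-- the pairing `|w|·|w'|` of the weights of two words -/
def wtB {I : Type} (Bf : I → I → ℤ) (w w' : FreeMonoid I) : ℤ :=
  ((FreeMonoid.toList w).map fun i =>
    ((FreeMonoid.toList w').map fun j => Bf i j).sum).sum

/-- the parity `p(w)` of a word -/
def par {I : Type} (p : I → ℕ) (w : FreeMonoid I) : ℕ :=
  ((FreeMonoid.toList w).map p).sum

/-- the twisting factor `q^{|w|·|w'|} π^{p(w)p(w')}` -/
def tw {I : Type} (Bf : I → I → ℤ) (p : I → ℕ) (w w' : FreeMonoid I) : Aq :=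
  qA ^ wtB Bf w w' * pA ^ (par p w * par p w')

/-- the free associative superalgebra `'f` on generators `θ_i`, realized as the monoid
algebra of the free monoid on `I` (so the words are the standard homogeneous basis) -/
abbrev FF (I : Type) : Type := MonoidAlgebra Aq (FreeMonoid I)

/-- the basis element of `'f` corresponding to a word `w` -/
def ofW {I : Type} (w : FreeMonoid I) : FF I := MonoidAlgebra.of Aq (FreeMonoid I) w

/-- the generator `θ_i` -/
def th {I : Type} (i : I) : FF I := ofW (FreeMonoid.of i)

/-- `q_i = q^{i·i/2}` -/
def qi {I : Type} (d : I → ℕ) (i : I) : Aq := qA ^ d i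

/-- `π_i = π^{p(i)}` -/
def pi' {I : Type} (p : I → ℕ) (i : I) : Aq := pA ^ p i

/-- `[m]_i = ((π_i q_i)^m - q_i^{-m})/(π_i q_i - q_i^{-1})` -/
def qinti {I : Type} (p d : I → ℕ) (i : I) (m : ℕ) : Aq :=
  ((pi' p i * qi d i) ^ m - qi d i ^ (-(m : ℤ))) / (pi' p i * qi d i - (qi d i)⁻¹)

/-- `[m]_i! = ∏_{s=1}^m [s]_i` -/
def qfacti {I : Type} (p d : I → ℕ) (i : I) (m : ℕ) : Aq :=
  ∏ s ∈ Finset.range m, qinti p d i (s + 1)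

/-- the divided power `θ_i^{(n)} = θ_i^n/[n]_i!` -/
def thpow {I : Type} (p d : I → ℕ) (i : I) (n : ℕ) : FF I :=
  (qfacti p d i n)⁻¹ • th i ^ n

/-- The defining properties of the bilinear form `(·,·)` on `'f`:
`(1,1)=1`, `(θ_i,θ_j) = δ_{ij}(1-π_i q_i^{-2})^{-1}`, `(x, y'y'') = (r(x), y'⊗y'')` and
`(xx', y'') = (x⊗x', r(y''))`, where the form on the twisted tensor square `T2` is
`(x₁⊗x₂, x₁'⊗x₂') = (x₁,x₁')(x₂,x₂')` (expressed by expanding along the basis `b2`). -/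
structure FormProps (I : Type) [DecidableEq I] (Bf : I → I → ℤ) (p d : I → ℕ)
    (T2 : Type) [Ring T2] [Algebra Aq T2]
    (b2 : Module.Basis (FreeMonoid I × FreeMonoid I) Aq T2)
    (r : FF I →ₐ[Aq] T2)
    (B : FF I →ₗ[Aq] FF I →ₗ[Aq] Aq) : Prop where
  one_one : B 1 1 = 1
  gen : ∀ i j, B (th i) (th j) =
      if i = j then (1 - pi' p i * qi d i ^ (-2 : ℤ))⁻¹ else 0
  mul_right : ∀ x y' y'', B x (y' * y'') =
      (b2.repr (r x)).sum fun pr c => c * B (ofW pr.1) y' * B (ofW pr.2) y''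
  mul_left : ∀ x x' y'', B (x * x') y'' =
      (b2.repr (r y'')).sum fun pr c => c * B x (ofW pr.1) * B x' (ofW pr.2)

/-- reversal of a word -/
def revW {I : Type} (w : FreeMonoid I) : FreeMonoid I :=
  FreeMonoid.ofList (FreeMonoid.toList w).reverse

/-- the weight `|w| ∈ ℕ[I]` of a word -/
def wtF {I : Type} (w : FreeMonoid I) : I →₀ ℕ :=
  ((FreeMonoid.toList w).map fun i => Finsupp.single i 1).sum

/-! Reversal of words preserves weights and parities, so by symmetry of `·` the map
`b(w₁, w₂) ↦ b(rev w₂, rev w₁)` is an anti-automorphism of the twisted tensor square;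
hence `r ∘ σ` and this map composed with `r` are anti-homomorphisms agreeing on the
generators. For the form, `(x, θ_j)` vanishes on words of length other than one, which are
the words fixed by reversal, and expanding `(σx, σv · θ_j)` through `r(σx)` reproduces the
expansion of `(x, θ_j · v)`, so invariance follows by induction on the second argument. -/

section Words

variable {I : Type}

lemma revW_one : revW (1 : FreeMonoid I) = 1 := rfl

lemma revW_of (i : I) : revW (FreeMonoid.of i) = FreeMonoid.of i := rfl

lemma revW_mul (a b : FreeMonoid I) : revW (a * b) = revW b * revW a := by
  simp [revW]

lemma revW_revW (a : FreeMonoid I) : revW (revW a) = a := by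
  simp [revW]

lemma revW_eq_one_iff {a : FreeMonoid I} : revW a = 1 ↔ a = 1 := by
  constructor
  · intro h
    rw [← revW_revW a, h, revW_one]
  · rintro rfl
    rfl

lemma length_toList_revW (a : FreeMonoid I) :
    (FreeMonoid.toList (revW a)).length = (FreeMonoid.toList a).length := by
  simp [revW]

lemma revW_eq_self_of_length_eq_one {a : FreeMonoid I}
    (ha : (FreeMonoid.toList a).length = 1) : revW a = a := by
  obtain ⟨i, hi⟩ := List.length_eq_one_iff.mp ha
  rw [revW, hi, List.reverse_singleton, ← hi, FreeMonoid.ofList_toList]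

lemma par_revW (p : I → ℕ) (w : FreeMonoid I) : par p (revW w) = par p w := by
  simp [par, revW]

lemma wtB_comm {Bf : I → I → ℤ} (hBf : ∀ i j, Bf i j = Bf j i) (a b : FreeMonoid I) :
    wtB Bf a b = wtB Bf b a := by
  have h := Multiset.sum_map_sum_map (FreeMonoid.toList a : Multiset I)
    (FreeMonoid.toList b : Multiset I) (f := Bf)
  simp only [Multiset.map_coe, Multiset.sum_coe] at h
  simp only [wtB, h, hBf]

lemma wtB_revW_left (Bf : I → I → ℤ) (a b : FreeMonoid I) :
    wtB Bf (revW a) b = wtB Bf a b := by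
  simp [wtB, revW]

lemma wtB_revW_right (Bf : I → I → ℤ) (a b : FreeMonoid I) :
    wtB Bf a (revW b) = wtB Bf a b := by
  simp [wtB, revW]

lemma tw_one_left (Bf : I → I → ℤ) (p : I → ℕ) (w : FreeMonoid I) : tw Bf p 1 w = 1 := by
  simp [tw, wtB, par]

lemma tw_revW {Bf : I → I → ℤ} (hBf : ∀ i j, Bf i j = Bf j i) (p : I → ℕ)
    (a b : FreeMonoid I) : tw Bf p (revW b) (revW a) = tw Bf p a b := by
  rw [tw, tw, wtB_revW_left, wtB_revW_right, wtB_comm hBf, par_revW, par_revW, mul_comm (par p b)]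

lemma ofW_one : (ofW 1 : FF I) = 1 := map_one _

lemma ofW_mul (a b : FreeMonoid I) : (ofW (a * b) : FF I) = ofW a * ofW b := map_mul _ a b

lemma ofW_of (i : I) : (ofW (FreeMonoid.of i) : FF I) = th i := rfl

lemma FF.linearMap_ext {M : Type} [AddCommMonoid M] [Module Aq M] {f g : FF I →ₗ[Aq] M}
    (h : ∀ w, f (ofW w) = g (ofW w)) : f = g :=
  MonoidAlgebra.lhom_ext' fun w => LinearMap.ext_ring (by simpa [ofW] using h w)

end Words

section TwistedSquare

variable {I : Type} {T : Type} [Ring T] [Algebra Aq T]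
  (b : Module.Basis (FreeMonoid I × FreeMonoid I) Aq T) {Bf : I → I → ℤ} {p : I → ℕ}

def TwistedMul (Bf : I → I → ℤ) (p : I → ℕ) : Prop :=
  ∀ w1 w2 w1' w2', b (w1, w2) * b (w1', w2') = tw Bf p w2 w1' • b (w1 * w1', w2 * w2')

def PrimitiveGenerators (r : FF I →ₐ[Aq] T) : Prop :=
  ∀ i, r (th i) = b (FreeMonoid.of i, 1) + b (1, FreeMonoid.of i)

lemma basis_one_one_eq_one (hmul : TwistedMul b Bf p) : b (1, 1) = 1 := by
  have hleft : LinearMap.mulLeft Aq (b (1, 1)) = LinearMap.id :=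
    b.ext fun ⟨w1, w2⟩ => by simp [hmul 1 1 w1 w2, tw_one_left]
  simpa using LinearMap.congr_fun hleft 1

/-- The unsigned flip of the two tensor factors composed with `σ ⊗ σ`. -/
def flipRev : T →ₗ[Aq] T := b.constr Aq fun pr => b (revW pr.2, revW pr.1)

lemma flipRev_basis (w1 w2 : FreeMonoid I) : flipRev b (b (w1, w2)) = b (revW w2, revW w1) :=
  b.constr_basis Aq _ _

lemma constr_flipRev (F : FreeMonoid I × FreeMonoid I → Aq) (t : T) :
    b.constr Aq F (flipRev b t) = b.constr Aq (fun pr => F (revW pr.2, revW pr.1)) t := by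
  change (b.constr Aq F ∘ₗ flipRev b) t = _
  congr 1
  exact b.ext fun ⟨w1, w2⟩ => by simp [flipRev_basis]

lemma flipRev_mul (hBf : ∀ i j, Bf i j = Bf j i) (hmul : TwistedMul b Bf p) (x y : T) :
    flipRev b (x * y) = flipRev b y * flipRev b x := by
  have key : (LinearMap.mul Aq T).compr₂ (flipRev b)
      = ((LinearMap.mul Aq T).compl₁₂ (flipRev b) (flipRev b)).flip :=
    b.ext fun ⟨w1, w2⟩ => b.ext fun ⟨w1', w2'⟩ => by
      simp [hmul w1 w2 w1' w2', hmul (revW w2'), flipRev_basis, revW_mul, tw_revW hBf]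
  exact LinearMap.congr_fun₂ key x y

lemma map_ofW_revW (hBf : ∀ i j, Bf i j = Bf j i) (hmul : TwistedMul b Bf p)
    {r : FF I →ₐ[Aq] T} (hr : PrimitiveGenerators b r) (w : FreeMonoid I) :
    r (ofW (revW w)) = flipRev b (r (ofW w)) := by
  induction w using FreeMonoid.recOn with
  | one => rw [revW_one, ofW_one, map_one, ← basis_one_one_eq_one b hmul, flipRev_basis, revW_one]
  | of_mul i v ih =>
    have hθ : r (th i) = flipRev b (r (th i)) := by
      rw [hr, map_add, flipRev_basis, flipRev_basis, revW_one, revW_of, add_comm]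
    rw [revW_mul, revW_of, ofW_mul, ofW_mul, map_mul, map_mul, flipRev_mul b hBf hmul, ih]
    exact congrArg _ hθ

lemma constr_map_th {r : FF I →ₐ[Aq] T} (hr : PrimitiveGenerators b r)
    (F : FreeMonoid I × FreeMonoid I → Aq) (i : I) :
    b.constr Aq F (r (th i)) = F (FreeMonoid.of i, 1) + F (1, FreeMonoid.of i) := by
  rw [hr, map_add, b.constr_basis, b.constr_basis]

end TwistedSquare

namespace FormProps

variable {I : Type} [DecidableEq I] {Bf : I → I → ℤ} {p d : I → ℕ} {T : Type} [Ring T]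
  [Algebra Aq T] {b : Module.Basis (FreeMonoid I × FreeMonoid I) Aq T} {r : FF I →ₐ[Aq] T}
  {B : FF I →ₗ[Aq] FF I →ₗ[Aq] Aq}

lemma apply_mul_right (hB : FormProps I Bf p d T b r B) (x y' y'' : FF I) :
    B x (y' * y'') = b.constr Aq (fun pr => B (ofW pr.1) y' * B (ofW pr.2) y'') (r x) := by
  simp only [hB.mul_right, b.constr_apply, smul_eq_mul, mul_assoc]

lemma apply_mul_left (hB : FormProps I Bf p d T b r B) (x x' y'' : FF I) :
    B (x * x') y'' = b.constr Aq (fun pr => B x (ofW pr.1) * B x' (ofW pr.2)) (r y'') := by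
  simp only [hB.mul_left, b.constr_apply, smul_eq_mul, mul_assoc]

lemma th_one (hB : FormProps I Bf p d T b r B) (hr : PrimitiveGenerators b r) (i : I) :
    B (th i) 1 = 0 := by
  have h := hB.apply_mul_right (th i) 1 1
  rw [mul_one, constr_map_th b hr] at h
  simp only [ofW_one, ofW_of, hB.one_one] at h
  linear_combination -h

lemma one_th (hB : FormProps I Bf p d T b r B) (hr : PrimitiveGenerators b r) (j : I) :
    B 1 (th j) = 0 := by
  have h := hB.apply_mul_left 1 1 (th j)
  rw [mul_one, constr_map_th b hr] at h
  simp only [ofW_one, ofW_of, hB.one_one] at h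
  linear_combination -h

lemma ofW_one_of_ne_one (hB : FormProps I Bf p d T b r B)
    (hr : PrimitiveGenerators b r) (hone : b (1, 1) = 1)
    {w : FreeMonoid I} (hw : w ≠ 1) : B (ofW w) 1 = 0 := by
  cases w using FreeMonoid.casesOn with
  | one => exact absurd rfl hw
  | of_mul i v =>
    rw [ofW_mul, hB.apply_mul_left, map_one, ← hone, b.constr_basis, ofW_one, ofW_of,
      hB.th_one hr, zero_mul]

lemma ofW_th_of_length_ne_one (hB : FormProps I Bf p d T b r B)
    (hr : PrimitiveGenerators b r) (hone : b (1, 1) = 1)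
    {w : FreeMonoid I} (hw : (FreeMonoid.toList w).length ≠ 1) (j : I) :
    B (ofW w) (th j) = 0 := by
  cases w using FreeMonoid.casesOn with
  | one => rw [ofW_one, hB.one_th hr]
  | of_mul i v =>
    have hv : v ≠ 1 := by
      rintro rfl
      simp at hw
    rw [ofW_mul, hB.apply_mul_left, constr_map_th b hr]
    simp only [ofW_one, ofW_of, hB.ofW_one_of_ne_one hr hone hv, hB.th_one hr, mul_zero,
      zero_mul, add_zero]

lemma ofW_revW_th (hB : FormProps I Bf p d T b r B)
    (hr : PrimitiveGenerators b r) (hone : b (1, 1) = 1)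
    (w : FreeMonoid I) (j : I) : B (ofW (revW w)) (th j) = B (ofW w) (th j) := by
  by_cases hw : (FreeMonoid.toList w).length = 1
  · rw [revW_eq_self_of_length_eq_one hw]
  · rw [hB.ofW_th_of_length_ne_one hr hone hw, hB.ofW_th_of_length_ne_one hr hone]
    rwa [length_toList_revW]

lemma ofW_revW_ofW_revW (hB : FormProps I Bf p d T b r B) (hBf : ∀ i j, Bf i j = Bf j i)
    (hmul : TwistedMul b Bf p) (hr : PrimitiveGenerators b r) (w w' : FreeMonoid I) :
    B (ofW (revW w)) (ofW (revW w')) = B (ofW w) (ofW w') := by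
  have hone := basis_one_one_eq_one b hmul
  induction w' using FreeMonoid.recOn generalizing w with
  | one =>
    rw [revW_one, ofW_one]
    by_cases hw : w = 1
    · rw [hw, revW_one]
    · rw [hB.ofW_one_of_ne_one hr hone hw,
        hB.ofW_one_of_ne_one hr hone (mt revW_eq_one_iff.mp hw)]
  | of_mul j v ih =>
    calc B (ofW (revW w)) (ofW (revW (FreeMonoid.of j * v)))
        = b.constr Aq (fun pr => B (ofW pr.1) (ofW (revW v)) * B (ofW pr.2) (th j))
            (r (ofW (revW w))) := by
          rw [revW_mul, revW_of, ofW_mul, ofW_of, hB.apply_mul_right]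
      _ = b.constr Aq (fun pr => B (ofW pr.1) (th j) * B (ofW pr.2) (ofW v)) (r (ofW w)) := by
          rw [map_ofW_revW b hBf hmul hr, constr_flipRev]
          congr 2 with pr : 1
          dsimp only
          rw [ih, hB.ofW_revW_th hr hone, mul_comm]
      _ = B (ofW w) (ofW (FreeMonoid.of j * v)) := by
          rw [ofW_mul, ofW_of, hB.apply_mul_right]

end FormProps

theorem sigma_coproduct_and_form_general
    (I : Type) [DecidableEq I] (Bf : I → I → ℤ) (p d : I → ℕ) (aij : I → I → ℤ)
    (hSCD : SCD I Bf p d aij)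
    (T2 : Type) [Ring T2] [Algebra Aq T2]
    (b2 : Module.Basis (FreeMonoid I × FreeMonoid I) Aq T2)
    (hmul : ∀ w1 w2 w1' w2', b2 (w1, w2) * b2 (w1', w2')
        = tw Bf p w2 w1' • b2 (w1 * w1', w2 * w2'))
    (r : FF I →ₐ[Aq] T2)
    (hr : ∀ i, r (th i) = b2 (FreeMonoid.of i, 1) + b2 (1, FreeMonoid.of i))
    (σ : FF I →ₗ[Aq] FF I)
    (hσ : ∀ w, σ (ofW w) = ofW (revW w))
    (B : FF I →ₗ[Aq] FF I →ₗ[Aq] Aq)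
    (hB : FormProps I Bf p d T2 b2 r B) :
    (∀ x : FF I,
      r (σ x) = (b2.constr Aq fun pr => b2 (revW pr.2, revW pr.1)) (r x)) ∧
    (∀ x x' : FF I, B (σ x) (σ x') = B x x') := by
  constructor
  · have h : r.toLinearMap ∘ₗ σ = flipRev b2 ∘ₗ r.toLinearMap :=
      FF.linearMap_ext fun w => by simp [hσ, map_ofW_revW b2 hSCD.symm hmul hr]
    exact fun x => LinearMap.congr_fun h x
  · have h : B.compl₁₂ σ σ = B :=
      FF.linearMap_ext fun w => FF.linearMap_ext fun w' => by
        simp [hσ, hB.ofW_revW_ofW_revW hSCD.symm hmul hr]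
    exact fun x x' => LinearMap.congr_fun₂ h x x'

/-- The anti-involution `σ` of `'f` fixing the generators (equivalently, reversing
words) satisfies `r(σ(x)) = (σ⊗σ)(ᵗr(x))`, where `ᵗr` is `r` followed by the unsigned
flip of the twisted tensor square; consequently `(σ(x), σ(x')) = (x, x')`. -/
theorem sigma_coproduct_and_form
    (I : Type) [DecidableEq I] (Bf : I → I → ℤ) (p d : I → ℕ) (aij : I → I → ℤ)
    (hSCD : SCD I Bf p d aij)
    (T2 : Type) [Ring T2] [Algebra Aq T2]
    (b2 : Module.Basis (FreeMonoid I × FreeMonoid I) Aq T2)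
    (hone : b2 (1, 1) = 1)
    (hmul : ∀ w1 w2 w1' w2', b2 (w1, w2) * b2 (w1', w2')
        = tw Bf p w2 w1' • b2 (w1 * w1', w2 * w2'))
    (r : FF I →ₐ[Aq] T2)
    (hr : ∀ i, r (th i) = b2 (FreeMonoid.of i, 1) + b2 (1, FreeMonoid.of i))
    (σ : FF I →ₗ[Aq] FF I)
    (hσ : ∀ w, σ (ofW w) = ofW (revW w))
    (B : FF I →ₗ[Aq] FF I →ₗ[Aq] Aq)
    (hB : FormProps I Bf p d T2 b2 r B) :
    (∀ x : FF I,
      r (σ x) = (b2.constr Aq fun pr => b2 (revW pr.2, revW pr.1)) (r x)) ∧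
    (∀ x x' : FF I, B (σ x) (σ x') = B x x') :=
  sigma_coproduct_and_form_general I Bf p d aij hSCD T2 b2 hmul r hr σ hσ B hB
end
end

section
/- Higher quantum Serre relations: for distinct i, j ∈ I and integers n ≥ 0, m > −n⟨i,j'⟩, the element e_{i,j;n,m} = ∑_{r+s=m} (−1)^r π_i^{nrp(i)p(j)+binom(r,2)p(i)} (π_i q_i)^{−r(n⟨i,j'⟩+m−1)} E_i^{(r)} E_j^{(n)} E_i^{(s)} equals 0 in the quantum covering group U. -/
/- The ring `Aq = ℚ(q)[π]/(π²-1) ≅ ℚ(q) × ℚ(q)` (via π ↦ (1, -1), an isomorphism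
since 2 is invertible).  Division/inversion is componentwise (the total fraction ring). -/
noncomputable section

/-- The defining relations (a)-(f) of the quantum covering group on a family of
elements `E_i, F_i, K_μ, J_μ` of an `Aq`-algebra `T`, for a root datum with coweight
lattice `Y`, weight lattice `X`, pairing `pair`, and embeddings `em : I → X`
(`i ↦ i'`) and `ey : I → Y` (`i ↦ i`); here `K̃_i = K_{d_i i}`, `J̃_i = J_{d_i i}`. -/
def URels (I : Type) [DecidableEq I] (p d : I → ℕ)
    (Y : Type) [AddCommGroup Y] (X : Type) [AddCommGroup X]
    (pair : Y → X → ℤ) (em : I → X) (ey : I → Y)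
    (T : Type) [Ring T] [Algebra Aq T]
    (e f : I → T) (k j : Y → T) : Prop :=
  (k 0 = 1) ∧
  (∀ μ μ', k μ * k μ' = k (μ + μ')) ∧
  (∀ μ, j (2 • μ) = 1) ∧
  (∀ μ μ', j μ * j μ' = j (μ + μ')) ∧
  (∀ μ μ', j μ * k μ' = k μ' * j μ) ∧
  (∀ μ i, k μ * e i = qA ^ pair μ (em i) • (e i * k μ)) ∧
  (∀ μ i, j μ * e i = pA ^ pair μ (em i) • (e i * j μ)) ∧
  (∀ μ i, k μ * f i = qA ^ (-pair μ (em i)) • (f i * k μ)) ∧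
  (∀ μ i, j μ * f i = pA ^ (-pair μ (em i)) • (f i * j μ)) ∧
  (∀ i i', e i * f i' - pA ^ (p i * p i') • (f i' * e i) =
    if i = i' then
      ((pi' p i * qi d i - (qi d i)⁻¹)⁻¹ : Aq) •
        (j (d i • ey i) * k (d i • ey i) - k (-(d i • ey i : Y)))
    else 0)

/-- the divided power `E_i^{(n)} = E_i^n/[n]_i!` -/
def edp {I : Type} (p d : I → ℕ) {U : Type} [Ring U] [Algebra Aq U]
    (e : I → U) (i : I) (n : ℕ) : U :=
  (qfacti p d i n)⁻¹ • e i ^ n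

/-! Induction on `n`, as in Lusztig's proof for `U_q`. For `n = 0` the element is a multiple of
`E_i^{(m)}` whose coefficient is a `(q,π)`-Gauss sum `∑_t (-1)^t π_i^{t(t-1)/2} v^{-t(m-1)} [m;t]_i`
(`v = π_i q_i`), which vanishes. For `n = 1` the `(q,π)`-Serre relation is the case
`m = 1 - ⟨i,j'⟩`, and `[m+1]_i e_{1,m+1} = e_{1,m} E_i - (…) E_i e_{1,m}` carries it to larger `m`.
The step to `n + 1` is `[n+1]_j e_{n+1,m} = ∑_k (…) e_{1,k} e_{n,m-k}`: after expanding, the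
coefficient of each word `E_i^{(x)} E_j E_i^b E_j^{(n)} E_i^{(z)}` with `b > 0` is again a Gauss
sum, and in every summand on the right one factor vanishes by induction.

All scalars that occur are monomials `(-1)^α π^β v^γ` (`qmono`), so coefficient identities are
exponent arithmetic; only the invertibility of the quantum integers uses that `q` is
transcendental. -/

open Finset

lemma Nat.choose_two_add (m n : ℕ) :
    (m + n).choose 2 = m.choose 2 + n.choose 2 + m * n := by
  induction n with
  | zero => simp
  | succ n ih =>
    rw [← add_assoc, Nat.choose_succ_succ, ih, Nat.choose_succ_succ, Nat.choose_one_right,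
      Nat.choose_one_right]
    ring

lemma zpow_add_of_isUnit {M : Type*} [DivisionMonoid M] {x : M} (hx : IsUnit x) (m n : ℤ) :
    x ^ (m + n) = x ^ m * x ^ n := by
  obtain ⟨u, rfl⟩ := hx
  simp only [← Units.val_zpow_eq_zpow_val, zpow_add, Units.val_mul]

lemma Finset.sum_range_triangle_reindex {M : Type*} [AddCommMonoid M] (m : ℕ)
    (F : ℕ → ℕ → ℕ → M) :
    ∑ k ∈ range (m + 1), ∑ x ∈ range (k + 1), ∑ t ∈ range (m - k + 1), F k x t =
      ∑ x ∈ range (m + 1), ∑ b ∈ range (m - x + 1), ∑ s ∈ range (b + 1),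
        F (x + s) x (b - s) := by
  calc _ = ∑ k ∈ range (m + 1), ∑ x ∈ range (k + 1),
        ∑ t ∈ range (m - (x + (k - x)) + 1), F (x + (k - x)) x t := by
        refine sum_congr rfl fun k _ => sum_congr rfl fun x hx => ?_
        rw [Nat.add_sub_of_le (mem_range_succ_iff.mp hx)]
    _ = ∑ x ∈ range (m + 1), ∑ s ∈ range (m - x + 1),
        ∑ t ∈ range (m - x - s + 1), F (x + s) x t := by
        rw [sum_range_diag_flip (m + 1) fun x s => ∑ t ∈ range (m - (x + s) + 1), F (x + s) x t]
        refine sum_congr rfl fun x hx => ?_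
        rw [show m + 1 - x = m - x + 1 by have := mem_range.mp hx; omega]
        simp only [Nat.sub_add_eq]
    _ = _ := by
        refine sum_congr rfl fun x _ => ?_
        rw [sum_range_diag_flip (m - x + 1) fun s t => F (x + s) x t]
        refine sum_congr rfl fun s hs => ?_
        rw [show m - x + 1 - s = m - x - s + 1 by have := mem_range.mp hs; omega]

lemma RatFunc.X_pow_ne_algebraMap {n : ℕ} (hn : n ≠ 0) (c : ℚ) :
    (RatFunc.X : RatFunc ℚ) ^ n ≠ algebraMap ℚ (RatFunc ℚ) c := fun h =>
  RatFunc.transcendental_X ⟨Polynomial.X ^ n - Polynomial.C c,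
    Polynomial.X_pow_sub_C_ne_zero (Nat.pos_of_ne_zero hn) c, by simp [h]⟩

namespace HigherSerre

lemma pA_mul_self : pA * pA = 1 := by
  ext <;> simp [pA]

lemma isUnit_pA : IsUnit pA :=
  .of_mul_eq_one pA pA_mul_self

lemma pA_pow_mod_two (n : ℕ) : pA ^ n = pA ^ (n % 2) := by
  conv_lhs => rw [← Nat.div_add_mod n 2, pow_add, pow_mul, sq, pA_mul_self, one_pow, one_mul]

lemma isUnit_pA_pow_mul_qA_pow_sub_inv (l : ℕ) {k : ℕ} (hk : k ≠ 0) :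
    IsUnit (pA ^ l * qA ^ k - (qA ^ k)⁻¹) := by
  have key : ∀ l' : ℕ, (-1 : RatFunc ℚ) ^ l' * RatFunc.X ^ k - (RatFunc.X ^ k)⁻¹ ≠ 0 := by
    intro l' h
    have hX : (RatFunc.X : RatFunc ℚ) ^ k ≠ 0 := pow_ne_zero _ RatFunc.X_ne_zero
    have hε : ((-1 : RatFunc ℚ) ^ l') ^ 2 = 1 := by rw [← pow_mul, pow_mul']; simp
    apply RatFunc.X_pow_ne_algebraMap (n := 2 * k) (by omega) ((-1) ^ l')
    field_simp at h
    rw [map_pow, map_neg, map_one]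
    linear_combination (-1 : RatFunc ℚ) ^ l' * h - RatFunc.X ^ (2 * k) * hε
  rw [Prod.isUnit_iff, isUnit_iff_ne_zero, isUnit_iff_ne_zero]
  exact ⟨by simpa [pA, qA] using key 0, by simpa [pA, qA] using key l⟩

def qmono (v : Aq) (α β : ℕ) (γ : ℤ) : Aq := (-1) ^ α * pA ^ β * v ^ γ

section qmono

variable {v : Aq}

lemma qmono_mul (hv : IsUnit v) (α β α' β' : ℕ) (γ γ' : ℤ) :
    qmono v α β γ * qmono v α' β' γ' = qmono v (α + α') (β + β') (γ + γ') := by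
  simp only [qmono, pow_add, zpow_add_of_isUnit hv]
  ring

lemma qmono_congr {α β α' β' : ℕ} {γ γ' : ℤ} (hα : α % 2 = α' % 2) (hβ : β % 2 = β' % 2)
    (hγ : γ = γ') : qmono v α β γ = qmono v α' β' γ' := by
  rw [qmono, qmono, neg_one_pow_eq_pow_mod_two, pA_pow_mod_two, hα, hβ, hγ,
    ← pA_pow_mod_two, ← neg_one_pow_eq_pow_mod_two]

lemma qmono_zero_zero (γ : ℤ) : qmono v 0 0 γ = v ^ γ := by
  simp [qmono]

lemma qmono_succ_left (α β : ℕ) (γ : ℤ) : qmono v (α + 1) β γ = -qmono v α β γ := by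
  simp only [qmono, pow_succ]
  ring

end qmono

variable {I : Type} (p d : I → ℕ) (i : I)

lemma isUnit_pi'_mul_qi : IsUnit (pi' p i * qi d i) := by
  have hqA : IsUnit qA := by
    rw [Prod.isUnit_iff, isUnit_iff_ne_zero, isUnit_iff_ne_zero]
    exact ⟨RatFunc.X_ne_zero, RatFunc.X_ne_zero⟩
  exact (isUnit_pA.pow _).mul (hqA.pow _)

lemma inv_qi_pow_eq_qmono (s : ℕ) :
    (qi d i ^ s)⁻¹ = qmono (pi' p i * qi d i) 0 (p i * s) (-s) := by
  rw [qmono, pow_zero, one_mul, zpow_neg, zpow_natCast, mul_pow, mul_inv, pi', ← pow_mul,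
    ← mul_assoc, (isUnit_pA.pow _).mul_inv_cancel, one_mul]

lemma qinti_add (s r : ℕ) :
    qinti p d i (s + r) =
      (pi' p i * qi d i) ^ r * qinti p d i s + (qi d i ^ s)⁻¹ * qinti p d i r := by
  simp only [qinti, div_eq_mul_inv, zpow_neg, zpow_natCast, pow_add, mul_inv]
  ring

lemma qinti_zero : qinti p d i 0 = 0 := by
  simp [qinti, div_eq_mul_inv]

lemma isUnit_qinti (hd : 0 < d i) {m : ℕ} (hm : 0 < m) : IsUnit (qinti p d i m) := by
  have key : ∀ m : ℕ, 0 < m → IsUnit ((pi' p i * qi d i) ^ m - qi d i ^ (-(m : ℤ))) := by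
    intro m hm
    rw [zpow_neg, zpow_natCast, pi', qi, mul_pow, ← pow_mul, ← pow_mul]
    exact isUnit_pA_pow_mul_qA_pow_sub_inv _ (by positivity)
  simpa [qinti] using (key m hm).div (by simpa using key 1 one_pos)

lemma qinti_one (hd : 0 < d i) : qinti p d i 1 = 1 := by
  rw [qinti, pow_one, Nat.cast_one, zpow_neg_one]
  exact (isUnit_pA_pow_mul_qA_pow_sub_inv (p i) hd.ne').div_self

lemma qfacti_succ (m : ℕ) : qfacti p d i (m + 1) = qfacti p d i m * qinti p d i (m + 1) :=
  prod_range_succ _ _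

lemma qinti_mul_inv_qfacti_succ (hd : 0 < d i) (m : ℕ) :
    qinti p d i (m + 1) * (qfacti p d i (m + 1))⁻¹ = (qfacti p d i m)⁻¹ := by
  rw [qfacti_succ, mul_inv, mul_left_comm, (isUnit_qinti p d i hd m.succ_pos).mul_inv_cancel,
    mul_one]

lemma gauss_sum_eq_zero (hd : 0 < d i) (b : ℕ) :
    ∑ t ∈ range (b + 2), qmono (pi' p i * qi d i) t (p i * t.choose 2) (-(t : ℤ) * b) *
      ((qfacti p d i t)⁻¹ * (qfacti p d i (b + 1 - t))⁻¹) = 0 := by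
  have hv := isUnit_pi'_mul_qi p d i
  set v := pi' p i * qi d i
  set q : ℕ → Aq := fun t => qmono v t (p i * t.choose 2) (-(t : ℤ) * b)
  rw [← (isUnit_qinti p d i hd b.succ_pos).mul_right_eq_zero, mul_sum]
  have split : ∀ t ∈ range (b + 2),
      qinti p d i (b + 1) * (q t * ((qfacti p d i t)⁻¹ * (qfacti p d i (b + 1 - t))⁻¹)) =
        q t * v ^ (b + 1 - t) * (qinti p d i t * (qfacti p d i t)⁻¹) *
          (qfacti p d i (b + 1 - t))⁻¹ +
        q t * (qi d i ^ t)⁻¹ * (qfacti p d i t)⁻¹ *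
          (qinti p d i (b + 1 - t) * (qfacti p d i (b + 1 - t))⁻¹) := by
    intro t ht
    rw [← Nat.add_sub_of_le (mem_range_succ_iff.mp ht), qinti_add, Nat.add_sub_cancel_left]
    ring
  rw [sum_congr rfl split, sum_add_distrib, sum_range_succ', sum_range_succ _ (b + 1)]
  simp only [qinti_zero, Nat.sub_self, zero_mul, mul_zero, add_zero]
  rw [← sum_add_distrib]
  refine sum_eq_zero fun t ht => ?_
  have htb : b + 1 - t = b - t + 1 := by have := mem_range.mp ht; omega
  rw [htb, qinti_mul_inv_qfacti_succ p d i hd, qinti_mul_inv_qfacti_succ p d i hd,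
    Nat.add_sub_add_right]
  have hq : q (t + 1) * v ^ (b - t) = -(q t * (qi d i ^ t)⁻¹) := by
    rw [← zpow_natCast, ← qmono_zero_zero, inv_qi_pow_eq_qmono, qmono_mul hv, qmono_mul hv,
      qmono_succ_left, Nat.choose_two_add t 1, Nat.choose_eq_zero_of_lt one_lt_two]
    congr 2 <;> push_cast [Nat.cast_sub (mem_range_succ_iff.mp ht)] <;> ring
  linear_combination ((qfacti p d i t)⁻¹ * (qfacti p d i (b - t))⁻¹) * hq

section DividedPowers

variable {U : Type} [Ring U] [Algebra Aq U] (e : I → U)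

lemma edp_zero : edp p d e i 0 = 1 := by
  simp [edp, qfacti]

lemma edp_mul_edp (r s : ℕ) :
    edp p d e i r * edp p d e i s =
      ((qfacti p d i r)⁻¹ * (qfacti p d i s)⁻¹) • e i ^ (r + s) := by
  rw [edp, edp, smul_mul_smul_comm, pow_add]

lemma smul_edp_succ (hd : 0 < d i) (r : ℕ) :
    qinti p d i (r + 1) • edp p d e i (r + 1) = (qfacti p d i r)⁻¹ • e i ^ (r + 1) := by
  rw [edp, smul_smul, qinti_mul_inv_qfacti_succ p d i hd]

lemma edp_one (hd : 0 < d i) : edp p d e i 1 = e i := by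
  simpa [qinti_one p d i hd, qfacti] using smul_edp_succ p d i e hd 0

lemma edp_mul_self (hd : 0 < d i) (r : ℕ) :
    edp p d e i r * e i = qinti p d i (r + 1) • edp p d e i (r + 1) := by
  rw [smul_edp_succ p d i e hd, edp, smul_mul_assoc, pow_succ]

lemma self_mul_edp (hd : 0 < d i) (r : ℕ) :
    e i * edp p d e i r = qinti p d i (r + 1) • edp p d e i (r + 1) := by
  rw [smul_edp_succ p d i e hd, edp, mul_smul_comm, pow_succ']

end DividedPowers

section SerreElements

variable (j : I) (a : ℤ) {U : Type} [Ring U] [Algebra Aq U] (e : I → U)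

def serreCoeff (n m r : ℕ) : Aq :=
  qmono (pi' p i * qi d i) r (p i * (n * r * p j + r.choose 2)) (-(r : ℤ) * (n * a + m - 1))

def serreElt (n m : ℕ) : U :=
  ∑ r ∈ range (m + 1),
    serreCoeff p d i j a n m r • (edp p d e i r * edp p d e j n * edp p d e i (m - r))

def serreSum (N : ℕ) : U :=
  ∑ n' ∈ range (N + 1), ((-1) ^ n' * pA ^ (p i * (n' * p j + n'.choose 2))) •
    (edp p d e i (N - n') * e j * edp p d e i n')

lemma serreCoeff_zero_right (n m : ℕ) : serreCoeff p d i j a n m 0 = 1 := by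
  simp [serreCoeff, qmono]

lemma serreElt_zero_left (hd : 0 < d i) {m : ℕ} (hm : 0 < m) : serreElt p d i j a e 0 m = 0 := by
  obtain ⟨b, rfl⟩ : ∃ b, m = b + 1 := ⟨m - 1, by omega⟩
  have hterm : ∀ r ∈ range (b + 2), serreCoeff p d i j a 0 (b + 1) r •
      (edp p d e i r * edp p d e j 0 * edp p d e i (b + 1 - r)) =
      (qmono (pi' p i * qi d i) r (p i * r.choose 2) (-(r : ℤ) * b) *
        ((qfacti p d i r)⁻¹ * (qfacti p d i (b + 1 - r))⁻¹)) • e i ^ (b + 1) := by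
    intro r hr
    rw [edp_zero, mul_one, edp_mul_edp, Nat.add_sub_of_le (mem_range_succ_iff.mp hr), smul_smul]
    simp [serreCoeff]
  rw [serreElt, sum_congr rfl hterm, ← sum_smul, gauss_sum_eq_zero p d i hd, zero_smul]

lemma serreCoeff_one_eq_qmono_mul {N : ℕ} (hN : (N : ℤ) = 1 - a) (hpar : Even (p i) ∨ Odd N)
    {r : ℕ} (hr : r ≤ N) :
    serreCoeff p d i j a 1 N r =
      qmono (pi' p i * qi d i) N (p i * (N * p j + N.choose 2)) 0 *
        ((-1) ^ (N - r) * pA ^ (p i * ((N - r) * p j + (N - r).choose 2))) := by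
  obtain ⟨t, rfl⟩ := Nat.exists_eq_add_of_le hr
  have hsign : (-1 : Aq) ^ t * pA ^ (p i * (t * p j + t.choose 2)) =
      qmono (pi' p i * qi d i) t (p i * (t * p j + t.choose 2)) 0 := by
    simp [qmono]
  rw [Nat.add_sub_cancel_left, hsign, qmono_mul (isUnit_pi'_mul_qi p d i), serreCoeff]
  have hev : Even (p i * (r * t)) := by
    rcases hpar with h | h
    · exact h.mul_right _
    · refine (Nat.even_mul.mpr ?_).mul_left _
      by_cases hr : Even r
      · exact Or.inl hr
      · exact Or.inr ((Nat.odd_add.mp h).mp (Nat.not_even_iff_odd.mp hr))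
  obtain ⟨w, hw⟩ := hev
  apply qmono_congr
  · omega
  · have : p i * ((r + t) * p j + (r + t).choose 2) + p i * (t * p j + t.choose 2) =
        p i * (1 * r * p j + r.choose 2) + p i * (r * t) +
          2 * (p i * (t * p j + t.choose 2)) := by
      rw [Nat.choose_two_add]; ring
    omega
  · push_cast at hN ⊢
    rw [hN]; ring

lemma serreElt_one_eq_zero_of_serreSum_eq_zero (hdj : 0 < d j) {N : ℕ} (hN : (N : ℤ) = 1 - a)
    (hpar : Even (p i) ∨ Odd N)
    (hS : serreSum p d i j e N = 0) :
    serreElt p d i j a e 1 N = 0 := by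
  rw [serreSum, ← sum_range_reflect] at hS
  rw [serreElt, ← smul_zero (qmono (pi' p i * qi d i) N (p i * (N * p j + N.choose 2)) 0), ← hS,
    smul_sum]
  refine sum_congr rfl fun r hr => ?_
  have hr : r ≤ N := mem_range_succ_iff.mp hr
  rw [serreCoeff_one_eq_qmono_mul p d i j a hN hpar hr, edp_one p d j e hdj, ← smul_smul,
    Nat.add_sub_cancel, Nat.sub_sub_self hr]

lemma qinti_mul_serreCoeff_succ (n : ℕ) {m r : ℕ} (hr : r ≤ m) :
    qinti p d i (m + 1) * serreCoeff p d i j a n (m + 1) (r + 1) +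
      qmono (pi' p i * qi d i) 0 (p i * (m + n * p j)) (-(n * a + 2 * m)) *
        (serreCoeff p d i j a n m r * qinti p d i (r + 1)) =
    serreCoeff p d i j a n m (r + 1) * qinti p d i (m - r) := by
  have hv := isUnit_pi'_mul_qi p d i
  have h1 : (pi' p i * qi d i) ^ (r + 1) * serreCoeff p d i j a n (m + 1) (r + 1) =
      serreCoeff p d i j a n m (r + 1) := by
    rw [← zpow_natCast, ← qmono_zero_zero, serreCoeff, serreCoeff, qmono_mul hv]
    congr 1 <;> push_cast <;> ring
  have h2 : (qi d i ^ (m - r))⁻¹ * serreCoeff p d i j a n (m + 1) (r + 1) =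
      -(qmono (pi' p i * qi d i) 0 (p i * (m + n * p j)) (-(n * a + 2 * m)) *
        serreCoeff p d i j a n m r) := by
    obtain ⟨c, rfl⟩ := Nat.exists_eq_add_of_le hr
    rw [inv_qi_pow_eq_qmono, serreCoeff, serreCoeff, qmono_mul hv, qmono_mul hv,
      ← qmono_succ_left, Nat.add_sub_cancel_left, Nat.choose_two_add r 1,
      Nat.choose_eq_zero_of_lt one_lt_two]
    congr 1 <;> push_cast <;> ring
  have hsplit := qinti_add p d i (m - r) (r + 1)
  rw [show m - r + (r + 1) = m + 1 by omega] at hsplit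
  rw [hsplit]
  linear_combination qinti p d i (m - r) * h1 + qinti p d i (r + 1) * h2

lemma qinti_smul_serreElt_succ (hd : 0 < d i) (n m : ℕ) :
    qinti p d i (m + 1) • serreElt p d i j a e n (m + 1) =
      serreElt p d i j a e n m * e i -
        qmono (pi' p i * qi d i) 0 (p i * (m + n * p j)) (-(n * a + 2 * m)) •
          (e i * serreElt p d i j a e n m) := by
  have hright : serreElt p d i j a e n m * e i =
      ∑ r ∈ range (m + 2), (serreCoeff p d i j a n m r * qinti p d i (m + 1 - r)) •
        (edp p d e i r * edp p d e j n * edp p d e i (m + 1 - r)) := by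
    rw [sum_range_succ, Nat.sub_self, qinti_zero, mul_zero, zero_smul, add_zero, serreElt,
      sum_mul]
    refine sum_congr rfl fun r hr => ?_
    rw [smul_mul_assoc, mul_assoc, edp_mul_self p d i e hd,
      show m - r + 1 = m + 1 - r by have := mem_range.mp hr; omega, mul_smul_comm, smul_smul]
  have hleft : e i * serreElt p d i j a e n m =
      ∑ r ∈ range (m + 1), (serreCoeff p d i j a n m r * qinti p d i (r + 1)) •
        (edp p d e i (r + 1) * edp p d e j n * edp p d e i (m + 1 - (r + 1))) := by
    rw [serreElt, mul_sum]
    refine sum_congr rfl fun r _ => ?_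
    rw [mul_smul_comm, ← mul_assoc, ← mul_assoc, self_mul_edp p d i e hd, Nat.add_sub_add_right,
      smul_mul_assoc, smul_mul_assoc, smul_smul]
  rw [hright, hleft, eq_sub_iff_add_eq, serreElt, smul_sum, smul_sum, sum_range_succ',
    sum_range_succ' _ (m + 1), ← add_rotate, ← sum_add_distrib]
  congr 1
  · refine sum_congr rfl fun r hr => ?_
    rw [smul_smul, smul_smul, ← add_smul, add_comm,
      qinti_mul_serreCoeff_succ p d i j a n (mem_range_succ_iff.mp hr), Nat.add_sub_add_right]
  · rw [serreCoeff_zero_right, serreCoeff_zero_right, smul_smul, mul_one, one_mul, Nat.sub_zero]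

lemma serreElt_one_eq_zero (hdi : 0 < d i) (hdj : 0 < d j) {N : ℕ} (hN : (N : ℤ) = 1 - a)
    (hpar : Even (p i) ∨ Odd N)
    (hS : serreSum p d i j e N = 0)
    {m : ℕ} (hm : N ≤ m) : serreElt p d i j a e 1 m = 0 := by
  induction m, hm using Nat.le_induction with
  | base => exact serreElt_one_eq_zero_of_serreSum_eq_zero p d i j a e hdj hN hpar hS
  | succ m _ ih =>
    have h := qinti_smul_serreElt_succ p d i j a e hdi 1 m
    rw [ih, zero_mul, mul_zero, smul_zero, sub_zero] at h
    exact (isUnit_qinti p d i hdi m.succ_pos).smul_eq_zero.mp h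

def serreWord (n x b z : ℕ) : U :=
  edp p d e i x * edp p d e j 1 * e i ^ b * edp p d e j n * edp p d e i z

lemma serreElt_one_mul_serreElt (n k l : ℕ) :
    serreElt p d i j a e 1 k * serreElt p d i j a e n l =
      ∑ x ∈ range (k + 1), ∑ t ∈ range (l + 1),
        (serreCoeff p d i j a 1 k x * serreCoeff p d i j a n l t *
          ((qfacti p d i (k - x))⁻¹ * (qfacti p d i t)⁻¹)) •
          serreWord p d i j e n x (k - x + t) (l - t) := by
  rw [serreElt, serreElt, sum_mul_sum]
  refine sum_congr rfl fun x _ => sum_congr rfl fun t _ => ?_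
  have hword : edp p d e i x * edp p d e j 1 * edp p d e i (k - x) *
      (edp p d e i t * edp p d e j n * edp p d e i (l - t)) =
      ((qfacti p d i (k - x))⁻¹ * (qfacti p d i t)⁻¹) •
        serreWord p d i j e n x (k - x + t) (l - t) := by
    simp only [serreWord, ← mul_assoc]
    rw [mul_assoc _ (edp p d e i (k - x)), edp_mul_edp, mul_smul_comm, smul_mul_assoc,
      smul_mul_assoc]
  rw [smul_mul_smul_comm, hword, smul_smul]

def serreWeight (n m k : ℕ) : Aq :=
  qmono (pi' p i * qi d i) 0 (p i * (n * k * p j)) (-(k : ℤ) * (n * a + m - k))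

lemma serreWeight_mul_serreCoeff_diag (n m x : ℕ) :
    serreWeight p d i j a n m x * serreCoeff p d i j a 1 x x =
      serreCoeff p d i j a (n + 1) m x := by
  rw [serreWeight, serreCoeff, serreCoeff, qmono_mul (isUnit_pi'_mul_qi p d i)]
  congr 1 <;> push_cast <;> ring

lemma serreWeight_mul_serreCoeff_cross (n : ℕ) {m x b s : ℕ} (hs : s ≤ b + 1)
    (hm : x + (b + 1) ≤ m) :
    serreWeight p d i j a n m (x + s) *
        (serreCoeff p d i j a 1 (x + s) x * serreCoeff p d i j a n (m - (x + s)) (b + 1 - s) *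
          ((qfacti p d i (x + s - x))⁻¹ * (qfacti p d i (b + 1 - s))⁻¹)) =
      qmono (pi' p i * qi d i) x (p i * (n * (x + (b + 1)) * p j + x * p j + x.choose 2))
          (-(x : ℤ) * (n * a + m - x) - x * (a + x - 1) - (b + 1) * (n * a + m - x - 1) +
            (b + 1) * b) *
        (qmono (pi' p i * qi d i) (b + 1 - s) (p i * (b + 1 - s).choose 2)
            (-((b + 1 - s : ℕ) : ℤ) * b) *
          ((qfacti p d i (b + 1 - s))⁻¹ * (qfacti p d i s)⁻¹)) := by
  obtain ⟨t, ht⟩ := Nat.exists_eq_add_of_le hs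
  obtain ⟨z, rfl⟩ := Nat.exists_eq_add_of_le hm
  have hb : (b : ℤ) = s + t - 1 := by omega
  rw [show b + 1 - s = t by omega, show x + (b + 1) + z - (x + s) = t + z by omega,
    Nat.add_sub_cancel_left, ht]
  have hv := isUnit_pi'_mul_qi p d i
  have key : serreWeight p d i j a n (x + (s + t) + z) (x + s) *
      (serreCoeff p d i j a 1 (x + s) x * serreCoeff p d i j a n (t + z) t) =
      qmono (pi' p i * qi d i) x (p i * (n * (x + (s + t)) * p j + x * p j + x.choose 2))
          (-(x : ℤ) * (n * a + ↑(x + (s + t) + z) - x) - x * (a + x - 1) -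
            (b + 1) * (n * a + ↑(x + (s + t) + z) - x - 1) + (b + 1) * b) *
        qmono (pi' p i * qi d i) t (p i * t.choose 2) (-(t : ℤ) * b) := by
    rw [serreWeight, serreCoeff, serreCoeff, qmono_mul hv, qmono_mul hv, qmono_mul hv]
    congr 1
    · ring
    · ring
    · push_cast; rw [hb]; ring
  linear_combination ((qfacti p d i t)⁻¹ * (qfacti p d i s)⁻¹) * key

lemma sum_serreWeight_smul_serreWord (hd : 0 < d i) (n : ℕ) {m x : ℕ} (hx : x ≤ m) :
    ∑ b ∈ range (m - x + 1), ∑ s ∈ range (b + 1),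
      (serreWeight p d i j a n m (x + s) *
        (serreCoeff p d i j a 1 (x + s) x * serreCoeff p d i j a n (m - (x + s)) (b - s) *
          ((qfacti p d i (x + s - x))⁻¹ * (qfacti p d i (b - s))⁻¹))) •
        serreWord p d i j e n x (x + s - x + (b - s)) (m - (x + s) - (b - s)) =
    serreCoeff p d i j a (n + 1) m x • serreWord p d i j e n x 0 (m - x) := by
  have hword : ∀ b ∈ range (m - x + 1), ∀ s ∈ range (b + 1),
      serreWord p d i j e n x (x + s - x + (b - s)) (m - (x + s) - (b - s)) =
        serreWord p d i j e n x b (m - x - b) := by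
    intro b hb s hs
    have := mem_range_succ_iff.mp hb
    have := mem_range_succ_iff.mp hs
    congr 1 <;> omega
  rw [sum_congr rfl fun b hb =>
    (sum_congr rfl fun s hs => by rw [hword b hb s hs]).trans (sum_smul ..).symm]
  rw [sum_range_succ', sum_eq_zero, zero_add]
  · simp [serreCoeff_zero_right, qfacti, serreWeight_mul_serreCoeff_diag]
  intro b hb
  have hbm : x + (b + 1) ≤ m := by have := mem_range.mp hb; omega
  rw [sum_congr rfl fun s hs =>
      serreWeight_mul_serreCoeff_cross p d i j a n (mem_range_succ_iff.mp hs) hbm,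
    ← mul_sum]
  refine smul_eq_zero_of_left (mul_eq_zero_of_right _ ?_) _
  rw [← gauss_sum_eq_zero p d i hd b]
  conv_rhs => rw [← sum_range_reflect]
  refine sum_congr rfl fun t ht => ?_
  have := mem_range.mp ht
  rw [show b + 2 - 1 - t = b + 1 - t by omega, Nat.sub_sub_self (by omega)]

lemma sum_serreWeight_smul_serreElt_one_mul (hdi : 0 < d i) (hdj : 0 < d j) (n m : ℕ) :
    ∑ k ∈ range (m + 1),
      serreWeight p d i j a n m k • (serreElt p d i j a e 1 k * serreElt p d i j a e n (m - k)) =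
    qinti p d j (n + 1) • serreElt p d i j a e (n + 1) m := by
  calc _ = ∑ k ∈ range (m + 1), ∑ x ∈ range (k + 1), ∑ t ∈ range (m - k + 1),
        (serreWeight p d i j a n m k *
          (serreCoeff p d i j a 1 k x * serreCoeff p d i j a n (m - k) t *
            ((qfacti p d i (k - x))⁻¹ * (qfacti p d i t)⁻¹))) •
          serreWord p d i j e n x (k - x + t) (m - k - t) := by
        refine sum_congr rfl fun k _ => ?_
        simp only [serreElt_one_mul_serreElt, smul_sum, smul_smul]
    _ = _ := Finset.sum_range_triangle_reindex m _
    _ = ∑ x ∈ range (m + 1),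
          serreCoeff p d i j a (n + 1) m x • serreWord p d i j e n x 0 (m - x) :=
        sum_congr rfl fun x hx =>
          sum_serreWeight_smul_serreWord p d i j a e hdi n (mem_range_succ_iff.mp hx)
    _ = _ := by
        rw [serreElt, smul_sum]
        refine sum_congr rfl fun x _ => ?_
        rw [serreWord, pow_zero, mul_one, mul_assoc (edp p d e i x), edp_one p d j e hdj,
          self_mul_edp p d j e hdj, mul_smul_comm, smul_mul_assoc, smul_smul, smul_smul, mul_comm]

lemma serreElt_eq_zero (hdi : 0 < d i) (hdj : 0 < d j) (ha : a ≤ 0) (hpar : Even (p i) ∨ Even a)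
    (hS : serreSum p d i j e (1 - a).toNat = 0)
    (n m : ℕ) (hm : (m : ℤ) > -(n : ℤ) * a) : serreElt p d i j a e n m = 0 := by
  have hN : ((1 - a).toNat : ℤ) = 1 - a := Int.toNat_of_nonneg (by omega)
  have hparN : Even (p i) ∨ Odd (1 - a).toNat :=
    hpar.imp_right fun ⟨c, hc⟩ => ⟨(-c).toNat, by omega⟩
  have hone : ∀ k : ℕ, (k : ℤ) > -a → serreElt p d i j a e 1 k = 0 := fun k hk =>
    serreElt_one_eq_zero p d i j a e hdi hdj hN hparN hS (by omega)
  induction n generalizing m with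
  | zero => exact serreElt_zero_left p d i j a e hdi (by push_cast at hm; omega)
  | succ n ih =>
    rw [← (isUnit_qinti p d j hdj n.succ_pos).smul_eq_zero,
      ← sum_serreWeight_smul_serreElt_one_mul p d i j a e hdi hdj]
    refine sum_eq_zero fun k hk => ?_
    by_cases hka : (k : ℤ) > -a
    · rw [hone k hka, zero_mul, smul_zero]
    · have hkm : k ≤ m := mem_range_succ_iff.mp hk
      rw [ih (m - k) (by push_cast [Nat.cast_sub hkm] at hm ⊢; linarith), mul_zero, smul_zero]

end SerreElements

end HigherSerre

theorem higher_serre_general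
    (I : Type) (Bf : I → I → ℤ) (p d : I → ℕ) (aij : I → I → ℤ)
    (hSCD : SCD I Bf p d aij)
    (U : Type) [Ring U] [Algebra Aq U]
    (e : I → U)
    (hSerreE : ∀ i i', i ≠ i' →
      ∑ n' ∈ Finset.range ((1 - aij i i').toNat + 1),
        ((-1) ^ n' * pA ^ (p i * (n' * p i' + n'.choose 2))) •
          (edp p d e i ((1 - aij i i').toNat - n') * e i' * edp p d e i n') = 0) :
    ∀ (i i' : I), i ≠ i' → ∀ (n m : ℕ), (m : ℤ) > -(n : ℤ) * aij i i' →
      ∑ rr ∈ Finset.range (m + 1),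
        ((-1) ^ rr * pA ^ (p i * (n * rr * p i' + rr.choose 2)) *
            (pi' p i * qi d i) ^ (-(rr : ℤ) * ((n : ℤ) * aij i i' + (m : ℤ) - 1))) •
          (edp p d e i rr * edp p d e i' n * edp p d e i (m - rr)) = 0 := by
  intro i i' hii' n m hm
  have hpar : Even (p i) ∨ Even (aij i i') := by
    rcases Nat.le_one_iff_eq_zero_or_eq_one.mp (hSCD.par_le i) with h | h
    · exact Or.inl (h ▸ Nat.even_iff.mpr rfl)
    · exact Or.inr (hSCD.odd_even i i' h)
  exact HigherSerre.serreElt_eq_zero p d i i' (aij i i') e (hSCD.dpos i) (hSCD.dpos i')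
    (hSCD.offdiag i i' hii') hpar (hSerreE i i' hii') n m hm

/-- Higher quantum Serre relations: for `i ≠ j` and `m > -n⟨i,j'⟩`,
`e_{i,j;n,m} = ∑_{r+s=m} (−1)^r π_i^{p(n,r;i,j)} (π_iq_i)^{−r(n⟨i,j'⟩+m−1)}
E_i^{(r)}E_j^{(n)}E_i^{(s)} = 0` in the quantum covering group (any algebra whose
generators satisfy the defining relations together with the `(q,π)`-Serre
relations in the `E`'s and in the `F`'s). -/
theorem higher_serre
    (I : Type) [DecidableEq I] (Bf : I → I → ℤ) (p d : I → ℕ) (aij : I → I → ℤ)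
    (hSCD : SCD I Bf p d aij)
    (hbc : ∀ i, d i % 2 = p i)
    (Y : Type) [AddCommGroup Y] (X : Type) [AddCommGroup X]
    (pair : Y → X → ℤ)
    (hpair1 : ∀ μ μ' x, pair (μ + μ') x = pair μ x + pair μ' x)
    (hpair2 : ∀ μ x x', pair μ (x + x') = pair μ x + pair μ x')
    (em : I → X) (ey : I → Y)
    (hpc : ∀ i i', pair (ey i) (em i') = aij i i')
    (U : Type) [Ring U] [Algebra Aq U]
    (e f : I → U) (k j : Y → U)
    (hU : URels I p d Y X pair em ey U e f k j)
    (hSerreE : ∀ i i', i ≠ i' →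
      ∑ n' ∈ Finset.range ((1 - aij i i').toNat + 1),
        ((-1) ^ n' * pA ^ (p i * (n' * p i' + n'.choose 2))) •
          (edp p d e i ((1 - aij i i').toNat - n') * e i' * edp p d e i n') = 0)
    (hSerreF : ∀ i i', i ≠ i' →
      ∑ n' ∈ Finset.range ((1 - aij i i').toNat + 1),
        ((-1) ^ n' * pA ^ (p i * (n' * p i' + n'.choose 2))) •
          (edp p d f i ((1 - aij i i').toNat - n') * f i' * edp p d f i n') = 0) :
    ∀ (i i' : I), i ≠ i' → ∀ (n m : ℕ), (m : ℤ) > -(n : ℤ) * aij i i' →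
      ∑ rr ∈ Finset.range (m + 1),
        ((-1) ^ rr * pA ^ (p i * (n * rr * p i' + rr.choose 2)) *
            (pi' p i * qi d i) ^ (-(rr : ℤ) * ((n : ℤ) * aij i i' + (m : ℤ) - 1))) •
          (edp p d e i rr * edp p d e i' n * edp p d e i (m - rr)) = 0 :=
  higher_serre_general I Bf p d aij hSCD U e hSerreE
end
end
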